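/- arXiv:1211.5233 — 2 statements merged into one kernel-verified Lean document; each statement's English description precedes it below -/
import Mathlib

section
/- For every integer n > 1 and all r, s ∈ ℕ₀, ∑_{m=1}^{n-1} σ'_{r,s}(m, n−m) = ∑_{(a,b,x,y) ∈ B'(n)} x^r y^s, where B'(n) = {(a,b,x,y) ∈ ℕ⁴ : ax + by = n, gcd(a,b) = 1, gcd(x,y) = 1}. -/
open Finset

/-- `σ'_{r,s}(m,n) = ∑ d^r e^s` over divisors `d ∣ m`, `e ∣ n` with
`gcd(d,e) = 1` and `gcd(m/d, n/e) = 1`. -/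
def sigma' (r s m n : ℕ) : ℕ :=
  ∑ d ∈ m.divisors, ∑ e ∈ n.divisors,
    if Nat.gcd d e = 1 ∧ Nat.gcd (m / d) (n / e) = 1 then d ^ r * e ^ s else 0

/-- `B'(n) = {(a,b,x,y) ∈ ℕ⁴ : ax + by = n, gcd(a,b) = 1, gcd(x,y) = 1}` as a finset. -/
def Bp (n : ℕ) : Finset (ℕ × ℕ × ℕ × ℕ) :=
  ((Finset.range (n + 1)) ×ˢ (Finset.range (n + 1)) ×ˢ (Finset.range (n + 1)) ×ˢ
      (Finset.range (n + 1))).filter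
    (fun p => 0 < p.1 ∧ 0 < p.2.1 ∧ 0 < p.2.2.1 ∧ 0 < p.2.2.2 ∧
      p.1 * p.2.2.1 + p.2.1 * p.2.2.2 = n ∧
      Nat.gcd p.1 p.2.1 = 1 ∧ Nat.gcd p.2.2.1 p.2.2.2 = 1)

theorem stmt16 (n : ℕ) (hn : 1 < n) (r s : ℕ) :
    ∑ m ∈ Finset.Ico 1 n, sigma' r s m (n - m) =
      ∑ p ∈ Bp n, p.2.2.1 ^ r * p.2.2.2 ^ s := by
  classical
  set S : Finset (ℕ × ℕ × ℕ) := ((Finset.Ico 1 n) ×ˢ ((range (n+1)) ×ˢ (range (n+1)))).filter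
    (fun q => q.2.1 ∣ q.1 ∧ q.2.2 ∣ (n - q.1) ∧ Nat.gcd q.2.1 q.2.2 = 1 ∧
      Nat.gcd (q.1 / q.2.1) ((n - q.1) / q.2.2) = 1) with hS
  have h1 : ∑ m ∈ Finset.Ico 1 n, sigma' r s m (n - m) = ∑ q ∈ S, q.2.1 ^ r * q.2.2 ^ s := by
    rw [hS, Finset.sum_filter, Finset.sum_product]
    refine Finset.sum_congr rfl fun m hm => ?_
    obtain ⟨hm1, hm2⟩ := Finset.mem_Ico.mp hm
    have hm0 : m ≠ 0 := by omega
    have hk0 : n - m ≠ 0 := by omega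
    rw [Finset.sum_product]
    have hsub1 : m.divisors ⊆ range (n+1) := fun d hd => by
      have := Nat.le_of_dvd (by omega) (Nat.mem_divisors.mp hd).1
      exact mem_range.mpr (by omega)
    have hsub2 : (n - m).divisors ⊆ range (n+1) := fun e he => by
      have := Nat.le_of_dvd (by omega) (Nat.mem_divisors.mp he).1
      exact mem_range.mpr (by omega)
    rw [sigma']
    symm
    rw [← Finset.sum_subset hsub1 (fun d _ hd => Finset.sum_eq_zero fun e _ => by
      rw [if_neg]; rintro ⟨hdm, -⟩; exact hd (Nat.mem_divisors.mpr ⟨hdm, hm0⟩))]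
    refine Finset.sum_congr rfl fun d hd => ?_
    rw [← Finset.sum_subset hsub2 (fun e _ he => by
      rw [if_neg]; rintro ⟨-, hek, -⟩; exact he (Nat.mem_divisors.mpr ⟨hek, hk0⟩))]
    refine Finset.sum_congr rfl fun e he => ?_
    have hdm := (Nat.mem_divisors.mp hd).1
    have hek := (Nat.mem_divisors.mp he).1
    by_cases h : Nat.gcd d e = 1 ∧ Nat.gcd (m / d) ((n - m) / e) = 1
    · rw [if_pos h, if_pos ⟨hdm, hek, h.1, h.2⟩]
    · rw [if_neg h, if_neg (by tauto)]
  rw [h1]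
  refine Finset.sum_bij' (fun q _ => (q.1 / q.2.1, (n - q.1) / q.2.2, q.2.1, q.2.2))
    (fun p _ => (p.1 * p.2.2.1, p.2.2.1, p.2.2.2)) ?_ ?_ ?_ ?_ ?_
  · rintro ⟨m, d, e⟩ hq
    simp only [hS, Finset.mem_filter, Finset.mem_product, Finset.mem_Ico, mem_range] at hq
    obtain ⟨⟨⟨hm1, hm2⟩, hd, he⟩, hdm, hek, hg1, hg2⟩ := hq
    have hd0 : 0 < d := Nat.pos_of_dvd_of_pos hdm (by omega)
    have he0 : 0 < e := Nat.pos_of_dvd_of_pos hek (by omega)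
    simp only [Bp, Finset.mem_filter, Finset.mem_product, mem_range]
    refine ⟨⟨?_, ?_, hd, he⟩, ?_, ?_, hd0, he0, ?_, hg2, hg1⟩
    · exact lt_of_le_of_lt (Nat.div_le_self _ _) (by omega)
    · exact lt_of_le_of_lt (Nat.div_le_self _ _) (by omega)
    · exact Nat.div_pos (Nat.le_of_dvd (by omega) hdm) hd0
    · exact Nat.div_pos (Nat.le_of_dvd (by omega) hek) he0
    · rw [Nat.div_mul_cancel hdm, Nat.div_mul_cancel hek]; omega
  · rintro ⟨a, b, x, y⟩ hp
    simp only [Bp, Finset.mem_filter, Finset.mem_product, mem_range] at hp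
    obtain ⟨⟨ha, hb, hx, hy⟩, ha0, hb0, hx0, hy0, heq, hgab, hgxy⟩ := hp
    simp only [hS, Finset.mem_filter, Finset.mem_product, Finset.mem_Ico, mem_range]
    have hby : n - a * x = b * y := by omega
    refine ⟨⟨⟨?_, ?_⟩, hx, hy⟩, ⟨a, mul_comm a x⟩, ?_, hgxy, ?_⟩
    · exact Nat.one_le_iff_ne_zero.mpr (by positivity)
    · nlinarith
    · rw [hby]; exact ⟨b, mul_comm b y⟩
    · rw [hby, Nat.mul_div_cancel a hx0, Nat.mul_div_cancel b hy0]; exact hgab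
  · rintro ⟨m, d, e⟩ hq
    simp only [hS, Finset.mem_filter, Finset.mem_product, Finset.mem_Ico, mem_range] at hq
    obtain ⟨-, hdm, -, -⟩ := hq
    simp [Nat.div_mul_cancel hdm]
  · rintro ⟨a, b, x, y⟩ hp
    simp only [Bp, Finset.mem_filter, Finset.mem_product, mem_range] at hp
    obtain ⟨-, -, -, hx0, hy0, heq, -, -⟩ := hp
    have hby : n - a * x = b * y := by omega
    simp [hby, Nat.mul_div_cancel a hx0, Nat.mul_div_cancel b hy0]
  · rintro ⟨m, d, e⟩ _; rfl
end

section
/- For every integer n > 1 and all r, s ≥ 1, the number of tuples (a,b,c,d,x,y,k,l) ∈ ℕ₀² × ℕ⁶ with gcd(a,c) = 1, gcd(b,d) = 1, such that k(a+c) = u^r and l(b+d) = v^s for positive integers u, v with ux + vy = n, equals ∑_{(u,v,x,y) ∈ B(n)} u^r v^s = ∑_{m=1}^{n-1} σ_r(m) σ_s(n−m). -/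
/-!
A counted tuple is assembled from `(u, v, x, y) ∈ B(n)`, a triple `(a, c, k)` with
`gcd(a, c) = 1`, `k (a + c) = u ^ r`, and a triple `(b, d, l)` with `gcd(b, d) = 1`,
`l (b + d) = v ^ s`; as `r, s ≥ 1`, the tuple determines `u` and `v`, so no tuple is counted
twice. There are `∑_{e ∣ N} φ(e) = N` triples with `k (a + c) = N`, which gives the first sum.
The second follows by splitting `n = u x + v y` as `m + (n - m)` with `m = u x`.
-/

open Finset

/-- `σ_k(m) = ∑_{d ∣ m} d^k`. -/
def sigmaFun (k m : ℕ) : ℕ := ∑ d ∈ m.divisors, d ^ k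

/-- `B(n) = {(a,b,x,y) ∈ ℕ⁴ : ax + by = n}` as a finset. -/
def Bn (n : ℕ) : Finset (ℕ × ℕ × ℕ × ℕ) :=
  ((Finset.range (n + 1)) ×ˢ (Finset.range (n + 1)) ×ˢ (Finset.range (n + 1)) ×ˢ
      (Finset.range (n + 1))).filter
    (fun p => 0 < p.1 ∧ 0 < p.2.1 ∧ 0 < p.2.2.1 ∧ 0 < p.2.2.2 ∧
      p.1 * p.2.2.1 + p.2.1 * p.2.2.2 = n)

theorem mem_Bn {n u v x y : ℕ} :
    (u, v, x, y) ∈ Bn n ↔ 0 < u ∧ 0 < v ∧ 0 < x ∧ 0 < y ∧ u * x + v * y = n := by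
  simp only [Bn, mem_filter, mem_product, mem_range, and_iff_right_iff_imp]
  rintro ⟨hu, hv, hx, hy, rfl⟩
  have : u ≤ u * x ∧ x ≤ u * x ∧ v ≤ v * y ∧ y ≤ v * y :=
    ⟨Nat.le_mul_of_pos_right u hx, Nat.le_mul_of_pos_left x hu,
      Nat.le_mul_of_pos_right v hy, Nat.le_mul_of_pos_left y hv⟩
  omega

def coprimeSplittings (N : ℕ) : Finset (ℕ × ℕ × ℕ) :=
  (range (N + 1) ×ˢ range (N + 1) ×ˢ range (N + 1)).filter
    fun t => 0 < t.2.1 ∧ 0 < t.2.2 ∧ t.1.Coprime t.2.1 ∧ t.2.2 * (t.1 + t.2.1) = N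

theorem mem_coprimeSplittings {N a c k : ℕ} :
    (a, c, k) ∈ coprimeSplittings N ↔ 0 < c ∧ 0 < k ∧ a.Coprime c ∧ k * (a + c) = N := by
  simp only [coprimeSplittings, mem_filter, mem_product, mem_range, and_iff_right_iff_imp]
  rintro ⟨hc, hk, -, rfl⟩
  have : a + c ≤ k * (a + c) ∧ k ≤ k * (a + c) :=
    ⟨Nat.le_mul_of_pos_left _ hk, Nat.le_mul_of_pos_right k (by omega)⟩
  omega

/-- Grouping the triples by `(a + c, k)`: the fibre over a factorisation `e * k = N` consists of
the residues `a < e` prime to `e`. -/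
theorem card_coprimeSplittings (N : ℕ) : #(coprimeSplittings N) = N := by
  calc #(coprimeSplittings N)
      = #(N.divisorsAntidiagonal.sigma fun ek => (range ek.1).filter ek.1.Coprime) := by
        refine card_nbij' (fun t => ⟨(t.1 + t.2.1, t.2.2), t.1⟩) (fun p => (p.2, p.1.1 - p.2, p.1.2))
          ?_ ?_ ?_ ?_
        · rintro ⟨a, c, k⟩ ht
          obtain ⟨hc, hk, hac, rfl⟩ := mem_coprimeSplittings.1 ht
          simp only [coe_sigma, Set.mem_sigma_iff, mem_coe, Nat.mem_divisorsAntidiagonal,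
            mem_filter, mem_range, Nat.coprime_self_add_left]
          exact ⟨⟨mul_comm _ _, by positivity⟩, by omega, hac.symm⟩
        · rintro ⟨⟨e, k⟩, a⟩ hp
          simp only [coe_sigma, Set.mem_sigma_iff, mem_coe, Nat.mem_divisorsAntidiagonal,
            mem_filter, mem_range] at hp
          obtain ⟨⟨rfl, hN⟩, hae, hcop⟩ := hp
          dsimp only
          rw [mem_coe, mem_coprimeSplittings, Nat.add_sub_cancel' hae.le, mul_comm,
            Nat.coprime_sub_self_right hae.le, Nat.coprime_comm]
          exact ⟨by omega, Nat.pos_of_ne_zero (right_ne_zero_of_mul hN), hcop, rfl⟩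
        · rintro ⟨a, c, k⟩ -
          simp
        · rintro ⟨⟨e, k⟩, a⟩ hp
          simp only [coe_sigma, Set.mem_sigma_iff, mem_coe, mem_filter, mem_range] at hp
          simp [Nat.add_sub_cancel' hp.2.1.le]
    _ = ∑ ek ∈ N.divisorsAntidiagonal, Nat.totient ek.1 := by
        rw [card_sigma]
        simp only [Nat.totient]
    _ = ∑ e ∈ N.divisors, Nat.totient e := Nat.sum_divisorsAntidiagonal fun e _ => Nat.totient e
    _ = N := Nat.sum_totient N

def splittingTuples (n r s : ℕ) : Set (ℕ × ℕ × ℕ × ℕ × ℕ × ℕ × ℕ × ℕ) :=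
  {p | ∃ a b c d x y k l : ℕ, p = (a, b, c, d, x, y, k, l) ∧
          0 < c ∧ 0 < d ∧ 0 < x ∧ 0 < y ∧ 0 < k ∧ 0 < l ∧
          Nat.gcd a c = 1 ∧ Nat.gcd b d = 1 ∧
          ∃ u v : ℕ, 0 < u ∧ 0 < v ∧ k * (a + c) = u ^ r ∧ l * (b + d) = v ^ s ∧
            u * x + v * y = n}

def splittingData (n r s : ℕ) :
    Finset (Σ _ : ℕ × ℕ × ℕ × ℕ, (ℕ × ℕ × ℕ) × (ℕ × ℕ × ℕ)) :=
  (Bn n).sigma fun q => coprimeSplittings (q.1 ^ r) ×ˢ coprimeSplittings (q.2.1 ^ s)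

def assembleTuple :
    (Σ _ : ℕ × ℕ × ℕ × ℕ, (ℕ × ℕ × ℕ) × (ℕ × ℕ × ℕ)) → ℕ × ℕ × ℕ × ℕ × ℕ × ℕ × ℕ × ℕ
  | ⟨(_, _, x, y), ((a, c, k), (b, d, l))⟩ => (a, b, c, d, x, y, k, l)

theorem card_splittingData (n r s : ℕ) :
    #(splittingData n r s) = ∑ q ∈ Bn n, q.1 ^ r * q.2.1 ^ s := by
  simp only [splittingData, card_sigma, card_product, card_coprimeSplittings]

theorem image_assembleTuple (n r s : ℕ) :
    assembleTuple '' splittingData n r s = splittingTuples n r s := by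
  ext p
  constructor
  · rintro ⟨⟨⟨u, v, x, y⟩, ⟨a, c, k⟩, ⟨b, d, l⟩⟩, hmem, rfl⟩
    simp only [splittingData, coe_sigma, Set.mem_sigma_iff, mem_coe, mem_product,
      mem_Bn, mem_coprimeSplittings] at hmem
    obtain ⟨⟨hu, hv, hx, hy, hn⟩, ⟨hc, hk, hac, hkr⟩, ⟨hd, hl, hbd, hls⟩⟩ := hmem
    exact ⟨a, b, c, d, x, y, k, l, rfl, hc, hd, hx, hy, hk, hl, hac, hbd, u, v, hu, hv,
      hkr, hls, hn⟩
  · rintro ⟨a, b, c, d, x, y, k, l, rfl, hc, hd, hx, hy, hk, hl, hac, hbd, u, v, hu, hv,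
      hkr, hls, hn⟩
    refine ⟨⟨(u, v, x, y), (a, c, k), (b, d, l)⟩, ?_, rfl⟩
    simp only [splittingData, coe_sigma, Set.mem_sigma_iff, mem_coe, mem_product,
      mem_Bn, mem_coprimeSplittings]
    exact ⟨⟨hu, hv, hx, hy, hn⟩, ⟨hc, hk, hac, hkr⟩, ⟨hd, hl, hbd, hls⟩⟩

theorem injOn_assembleTuple {r s : ℕ} (hr : r ≠ 0) (hs : s ≠ 0) (n : ℕ) :
    Set.InjOn assembleTuple (splittingData n r s) := by
  rintro ⟨⟨u, v, x, y⟩, ⟨a, c, k⟩, ⟨b, d, l⟩⟩ h ⟨⟨u', v', x', y'⟩, ⟨a', c', k'⟩, ⟨b', d', l'⟩⟩ h' heq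
  simp only [splittingData, coe_sigma, Set.mem_sigma_iff, mem_coe, mem_product,
    mem_coprimeSplittings] at h h'
  simp only [assembleTuple, Prod.mk.injEq] at heq
  obtain ⟨rfl, rfl, rfl, rfl, rfl, rfl, rfl, rfl⟩ := heq
  have hu : u = u' := Nat.pow_left_injective hr (h.2.1.2.2.2.symm.trans h'.2.1.2.2.2)
  have hv : v = v' := Nat.pow_left_injective hs (h.2.2.2.2.2.symm.trans h'.2.2.2.2.2)
  subst hu hv
  rfl

theorem ncard_splittingTuples {r s : ℕ} (hr : r ≠ 0) (hs : s ≠ 0) (n : ℕ) :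
    (splittingTuples n r s).ncard = ∑ q ∈ Bn n, q.1 ^ r * q.2.1 ^ s := by
  rw [← image_assembleTuple, (injOn_assembleTuple hr hs n).ncard_image, Set.ncard_coe_finset,
    card_splittingData]

theorem sigmaFun_eq_sum_divisorsAntidiagonal (k m : ℕ) :
    sigmaFun k m = ∑ d ∈ m.divisorsAntidiagonal, d.1 ^ k :=
  (Nat.sum_divisorsAntidiagonal fun d _ => d ^ k).symm

/-- `(u, v, x, y) ↦ (m, (u, x), (v, y))` with `m = u x` identifies `B(n)` with the pairs of
factorisations of `m` and `n - m`, `0 < m < n`. -/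
theorem sum_Bn_eq_sum_sigmaFun_mul_sigmaFun (n r s : ℕ) :
    ∑ q ∈ Bn n, q.1 ^ r * q.2.1 ^ s = ∑ m ∈ Ico 1 n, sigmaFun r m * sigmaFun s (n - m) := by
  simp only [sigmaFun_eq_sum_divisorsAntidiagonal, sum_mul_sum, ← sum_product', sum_sigma']
  refine sum_nbij' (fun q => ⟨q.1 * q.2.2.1, (q.1, q.2.2.1), (q.2.1, q.2.2.2)⟩)
    (fun p => (p.2.1.1, p.2.2.1, p.2.1.2, p.2.2.2)) ?_ ?_ ?_ ?_ fun _ _ => rfl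
  · rintro ⟨u, v, x, y⟩ hq
    obtain ⟨hu, hv, hx, hy, rfl⟩ := mem_Bn.1 hq
    simp only [mem_sigma, mem_Ico, mem_product, Nat.mem_divisorsAntidiagonal,
      Nat.add_sub_cancel_left, true_and]
    have : 0 < u * x ∧ 0 < v * y := ⟨by positivity, by positivity⟩
    omega
  · rintro ⟨m, ⟨u, x⟩, ⟨v, y⟩⟩ hp
    simp only [mem_sigma, mem_Ico, mem_product, Nat.mem_divisorsAntidiagonal] at hp
    obtain ⟨⟨hm, hmn⟩, ⟨rfl, hux⟩, ⟨hvy, hnm⟩⟩ := hp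
    rw [← hvy] at hnm
    simp only [mul_ne_zero_iff, ← Nat.pos_iff_ne_zero] at hux hnm
    simp only [mem_Bn]
    omega
  · rintro ⟨u, v, x, y⟩ -
    rfl
  · rintro ⟨m, ⟨u, x⟩, ⟨v, y⟩⟩ hp
    simp only [mem_sigma, mem_product, Nat.mem_divisorsAntidiagonal] at hp
    rw [hp.2.1.1]

theorem stmt19_general (n r s : ℕ) (hr : 1 ≤ r) (hs : 1 ≤ s) :
    Set.ncard {p : ℕ × ℕ × ℕ × ℕ × ℕ × ℕ × ℕ × ℕ |
        ∃ a b c d x y k l : ℕ, p = (a, b, c, d, x, y, k, l) ∧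
          0 < c ∧ 0 < d ∧ 0 < x ∧ 0 < y ∧ 0 < k ∧ 0 < l ∧
          Nat.gcd a c = 1 ∧ Nat.gcd b d = 1 ∧
          ∃ u v : ℕ, 0 < u ∧ 0 < v ∧ k * (a + c) = u ^ r ∧ l * (b + d) = v ^ s ∧
            u * x + v * y = n} =
      ∑ p ∈ Bn n, p.1 ^ r * p.2.1 ^ s ∧
    ∑ p ∈ Bn n, p.1 ^ r * p.2.1 ^ s =
      ∑ m ∈ Finset.Ico 1 n, sigmaFun r m * sigmaFun s (n - m) :=
  ⟨ncard_splittingTuples (by omega) (by omega) n, sum_Bn_eq_sum_sigmaFun_mul_sigmaFun n r s⟩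

theorem stmt19 (n r s : ℕ) (hn : 1 < n) (hr : 1 ≤ r) (hs : 1 ≤ s) :
    Set.ncard {p : ℕ × ℕ × ℕ × ℕ × ℕ × ℕ × ℕ × ℕ |
        ∃ a b c d x y k l : ℕ, p = (a, b, c, d, x, y, k, l) ∧
          0 < c ∧ 0 < d ∧ 0 < x ∧ 0 < y ∧ 0 < k ∧ 0 < l ∧
          Nat.gcd a c = 1 ∧ Nat.gcd b d = 1 ∧
          ∃ u v : ℕ, 0 < u ∧ 0 < v ∧ k * (a + c) = u ^ r ∧ l * (b + d) = v ^ s ∧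
            u * x + v * y = n} =
      ∑ p ∈ Bn n, p.1 ^ r * p.2.1 ^ s ∧
    ∑ p ∈ Bn n, p.1 ^ r * p.2.1 ^ s =
      ∑ m ∈ Finset.Ico 1 n, sigmaFun r m * sigmaFun s (n - m) :=
  stmt19_general n r s hr hs
end
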